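/- arXiv:1903.03776 — 3 statements merged into one kernel-verified Lean document; each statement's English description precedes it below -/
import Mathlib

section
/- Let L be a finite-dimensional Lie algebra over the complex numbers of dimension n + 1 with n ≥ 2, such that the derived algebra D(L) = [L, L] is one-dimensional and satisfies [L, D(L)] = D(L). Then L has a basis {x, y, z_1, …, z_{n−1}} such that [x, y] = y and all other brackets of pairs of basis elements are zero; in particular L is the direct sum of the two-dimensional nonabelian solvable Lie algebra Span{x, y} and the n − 1 one-dimensional abelian subalgebras Span{z_j}. -/
/-!
Choose `y` spanning the one-dimensional derived algebra, so every bracket is a multiple of `y`.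
Since `[L, D(L)] = D(L)`, some `x` has `[x, y] = y`; then `ad x` is the identity on `D(L)`, and the
Jacobi identity gives `[z, z'] = [x, [z, z']] = [[x, z], z'] + [z, [x, z']] = 0` for `z, z'`
commuting with `x`. Every element becomes one of `ker (ad y)` after adding a multiple of `x`
(as `[y, x] = -y`), and an element of `ker (ad y)` becomes one of `Z = ker (ad x) ∩ ker (ad y)`
after adding a multiple of `y`. So `L = ℂx ⊕ ℂy ⊕ Z`, and any basis of `Z` completes `x, y`.
-/

open Module Submodule LieAlgebra

theorem Submodule.exists_eq_span_singleton_of_finrank_eq_one {K V : Type*} [Field K]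
    [AddCommGroup V] [Module K V] (W : Submodule K V) [FiniteDimensional K W]
    (h : finrank K W = 1) : ∃ y ≠ 0, W = K ∙ y := by
  have := (W.finrank_le_one_iff_isPrincipal).1 h.le
  refine ⟨IsPrincipal.generator W, fun h0 => ?_, (IsPrincipal.span_singleton_generator W).symm⟩
  rw [← IsPrincipal.eq_bot_iff_generator_eq_zero] at h0
  subst h0
  simp at h

namespace LieAlgebra

variable {K L : Type*} [Field K] [LieRing L] [LieAlgebra K L]

theorem exists_lie_add_smul_eq_zero {u v a : L} (h : ⁅u, a⁆ ∈ K ∙ ⁅u, v⁆) :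
    ∃ c : K, ⁅u, a + c • v⁆ = 0 := by
  obtain ⟨c, hc⟩ := mem_span_singleton.1 h
  exact ⟨-c, by rw [lie_add, lie_smul, ← hc, neg_smul, add_neg_cancel]⟩

theorem eq_zero_of_smul_add_eq_zero {u v z : L} {c : K} (huv : ⁅u, v⁆ ≠ 0) (hz : ⁅u, z⁆ = 0)
    (h : c • v + z = 0) : c = 0 := by
  have := congrArg (⁅u, ·⁆) h
  simp only [lie_add, lie_smul, hz, add_zero, lie_zero] at this
  exact (smul_eq_zero.1 this).resolve_right huv

variable {x y : L}

theorem exists_lie_eq_self_of_lie_top_eq {I : LieIdeal K L} (hy : y ≠ 0)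
    (hI : LieSubmodule.toSubmodule I = K ∙ y) (hIL : ⁅(⊤ : LieIdeal K L), I⁆ = I) :
    ∃ x : L, ⁅x, y⁆ = y := by
  have hyI : y ∈ I := by
    rw [← LieSubmodule.mem_toSubmodule, hI]
    exact mem_span_singleton_self y
  obtain ⟨a, ha⟩ : ∃ a : L, ⁅a, y⁆ ≠ 0 := by
    by_contra! h
    have : ⁅(⊤ : LieIdeal K L), I⁆ = ⊥ := (LieSubmodule.lie_eq_bot_iff _ _).2 fun a _ d hd => by
      rw [← LieSubmodule.mem_toSubmodule, hI] at hd
      obtain ⟨c, rfl⟩ := mem_span_singleton.1 hd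
      rw [lie_smul, h, smul_zero]
    rw [hIL] at this
    exact hy (by simpa [this] using hyI)
  obtain ⟨c, hc⟩ := mem_span_singleton.1 (hI ▸ I.lie_mem hyI : ⁅a, y⁆ ∈ K ∙ y)
  have hc0 : c ≠ 0 := by
    rintro rfl
    exact ha (by rw [← hc, zero_smul])
  exact ⟨c⁻¹ • a, by rw [smul_lie, ← hc, smul_smul, inv_mul_cancel₀ hc0, one_smul]⟩

theorem lie_eq_self_of_mem_span (hxy : ⁅x, y⁆ = y) {v : L} (hv : v ∈ K ∙ y) : ⁅x, v⁆ = v := by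
  obtain ⟨c, rfl⟩ := mem_span_singleton.1 hv
  rw [lie_smul, hxy]

theorem lie_eq_zero_of_lie_eq_zero (hxy : ⁅x, y⁆ = y) (hy : ∀ a b : L, ⁅a, b⁆ ∈ K ∙ y)
    {z z' : L} (hz : ⁅x, z⁆ = 0) (hz' : ⁅x, z'⁆ = 0) : ⁅z, z'⁆ = 0 := by
  rw [← lie_eq_self_of_mem_span hxy (hy z z'), leibniz_lie, hz, hz', zero_lie, lie_zero,
    add_zero]

theorem exists_basis_finCons_of_lie_eq_self [FiniteDimensional K L] (hy0 : y ≠ 0)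
    (hy : ∀ a b : L, ⁅a, b⁆ ∈ K ∙ y) (hxy : ⁅x, y⁆ = y) :
    ∃ (m : ℕ) (w : Fin m → L), (∀ i, ⁅x, w i⁆ = 0 ∧ ⁅y, w i⁆ = 0) ∧
      ∃ b : Module.Basis (Fin (m + 1 + 1)) K L, ⇑b = Fin.cons x (Fin.cons y w) := by
  let O := LinearMap.ker (ad K L y)
  let Z := LinearMap.ker (ad K L x) ⊓ O
  have mem_O (a : L) : a ∈ O ↔ ⁅y, a⁆ = 0 := LinearMap.mem_ker
  have mem_Z (a : L) : a ∈ Z ↔ ⁅x, a⁆ = 0 ∧ ⁅y, a⁆ = 0 :=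
    mem_inf.trans (and_congr LinearMap.mem_ker (mem_O a))
  have hyx : ⁅y, x⁆ = -y := by rw [← lie_skew, hxy]
  let bO : Module.Basis (Fin (finrank K Z + 1)) K O :=
    Basis.mkFinConsOfLE y ((mem_O y).2 (lie_self y)) (finBasis K Z) inf_le_right
      (fun c z hz => eq_zero_of_smul_add_eq_zero (by rwa [hxy]) ((mem_Z z).1 hz).1)
      (fun a ha => by
        obtain ⟨c, hc⟩ := exists_lie_add_smul_eq_zero (hxy ▸ hy x a)
        refine ⟨c, (mem_Z _).2 ⟨hc, ?_⟩⟩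
        rw [lie_add, (mem_O a).1 ha, lie_smul, lie_self, smul_zero, add_zero])
  let b : Module.Basis (Fin (finrank K Z + 1 + 1)) K L :=
    Basis.mkFinCons x bO
      (fun c a ha => eq_zero_of_smul_add_eq_zero (by rwa [hyx, neg_ne_zero]) ((mem_O a).1 ha))
      (fun a => exists_lie_add_smul_eq_zero <| by
        rw [hyx, ← Set.neg_singleton, span_neg]
        exact hy y a)
  refine ⟨_, fun i => (finBasis K Z i : L), fun i => (mem_Z _).1 (finBasis K Z i).2, b, ?_⟩
  refine (Basis.coe_mkFinCons _ _ _ _).trans ?_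
  rw [Basis.coe_mkFinConsOfLE, Fin.comp_cons]
  rfl

theorem lie_finCons_finCons (hy : ∀ a b : L, ⁅a, b⁆ ∈ K ∙ y) (hxy : ⁅x, y⁆ = y)
    {m : ℕ} {w : Fin m → L} (hw : ∀ i, ⁅x, w i⁆ = 0 ∧ ⁅y, w i⁆ = 0) :
    let v : Fin (m + 1 + 1) → L := Fin.cons x (Fin.cons y w)
    ⁅v 0, v 1⁆ = v 1 ∧ ∀ i j, ¬(i = 0 ∧ j = 1) → ¬(i = 1 ∧ j = 0) → ⁅v i, v j⁆ = 0 := by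
  have hwx (i) : ⁅w i, x⁆ = 0 := by rw [← lie_skew, (hw i).1, neg_zero]
  have hwy (i) : ⁅w i, y⁆ = 0 := by rw [← lie_skew, (hw i).2, neg_zero]
  have hww (i j) : ⁅w i, w j⁆ = 0 := lie_eq_zero_of_lie_eq_zero hxy hy (hw i).1 (hw j).1
  refine ⟨hxy, fun i j h01 h10 => ?_⟩
  have h1 : (1 : Fin (m + 1 + 1)) = Fin.succ 0 := rfl
  rw [h1] at h01 h10
  cases i using Fin.cases with
  | zero => cases j using Fin.cases with
    | zero => exact lie_self x
    | succ j => cases j using Fin.cases with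
      | zero => exact absurd ⟨rfl, rfl⟩ h01
      | succ j => exact (hw j).1
  | succ i => cases i using Fin.cases with
    | zero => cases j using Fin.cases with
      | zero => exact absurd ⟨rfl, rfl⟩ h10
      | succ j => cases j using Fin.cases with
        | zero => exact lie_self y
        | succ j => exact (hw j).2
    | succ i => cases j using Fin.cases with
      | zero => exact hwx i
      | succ j => cases j using Fin.cases with
        | zero => exact hwy i
        | succ j => exact hww i j

end LieAlgebra

theorem anA1_structure_general
    (n : ℕ)
    (L : Type*) [LieRing L] [LieAlgebra ℂ L] [FiniteDimensional ℂ L]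
    (hdim : Module.finrank ℂ L = n + 1)
    (hD : Module.finrank ℂ ↥(⁅(⊤ : LieIdeal ℂ L), (⊤ : LieIdeal ℂ L)⁆ : LieIdeal ℂ L) = 1)
    (hnp : ⁅(⊤ : LieIdeal ℂ L), (⁅(⊤ : LieIdeal ℂ L), (⊤ : LieIdeal ℂ L)⁆ : LieIdeal ℂ L)⁆ =
      ⁅(⊤ : LieIdeal ℂ L), (⊤ : LieIdeal ℂ L)⁆) :
    ∃ b : Module.Basis (Fin (n + 1)) ℂ L,
      ⁅b 0, b 1⁆ = b 1 ∧
      ∀ i j : Fin (n + 1), ¬(i = 0 ∧ j = 1) → ¬(i = 1 ∧ j = 0) → ⁅b i, b j⁆ = 0 := by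
  obtain ⟨y, hy0, hDy⟩ := Submodule.exists_eq_span_singleton_of_finrank_eq_one _ hD
  have hy (a b : L) : ⁅a, b⁆ ∈ ℂ ∙ y :=
    hDy ▸ LieSubmodule.lie_mem_lie (LieSubmodule.mem_top a) (LieSubmodule.mem_top b)
  obtain ⟨x, hxy⟩ := exists_lie_eq_self_of_lie_top_eq hy0 hDy hnp
  obtain ⟨m, w, hw, b, hb⟩ := exists_basis_finCons_of_lie_eq_self hy0 hy hxy
  obtain rfl : n = m + 1 := by simpa [hdim] using finrank_eq_card_basis b
  exact ⟨b, hb ▸ lie_finCons_finCons hy hxy hw⟩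

/-- An A(n)-A(1) algebra with `n ≥ 2` (a complex Lie algebra of dimension `n+1`
whose derived algebra `D(L) = [L,L]` is one-dimensional and satisfies `[L, D(L)] = D(L)`)
has a basis `{x, y, z_1, …, z_{n-1}}` with `[x, y] = y` and all other brackets of pairs of
basis elements zero; in particular it is the direct sum of the two-dimensional nonabelian
solvable algebra `Span{x, y}` and `n - 1` one-dimensional abelian algebras. -/
theorem anA1_structure
    (n : ℕ) (hn : 2 ≤ n)
    (L : Type*) [LieRing L] [LieAlgebra ℂ L] [FiniteDimensional ℂ L]
    (hdim : Module.finrank ℂ L = n + 1)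
    (hD : Module.finrank ℂ ↥(⁅(⊤ : LieIdeal ℂ L), (⊤ : LieIdeal ℂ L)⁆ : LieIdeal ℂ L) = 1)
    (hnp : ⁅(⊤ : LieIdeal ℂ L), (⁅(⊤ : LieIdeal ℂ L), (⊤ : LieIdeal ℂ L)⁆ : LieIdeal ℂ L)⁆ =
      ⁅(⊤ : LieIdeal ℂ L), (⊤ : LieIdeal ℂ L)⁆) :
    ∃ b : Module.Basis (Fin (n + 1)) ℂ L,
      ⁅b 0, b 1⁆ = b 1 ∧
      ∀ i j : Fin (n + 1), ¬(i = 0 ∧ j = 1) → ¬(i = 1 ∧ j = 0) → ⁅b i, b j⁆ = 0 :=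
  anA1_structure_general n L hdim hD hnp
end

section
/- Let n ≥ 2 and let L₁ and L₂ be finite-dimensional complex Lie algebras, each of dimension n + 1, each with one-dimensional derived algebra D(L_i) = [L_i, L_i] satisfying [L_i, D(L_i)] = D(L_i). Then L₁ and L₂ are isomorphic as Lie algebras. -/
/-!
Let `D = K e` be the derived algebra. Every bracket lies in `D`, so `⁅y, z⁆ = β y z • e` for a
bilinear form `β`, which is alternating, and `⁅L, D⁆ = D` gives `x` with `⁅x, e⁆ = e`. Put
`λ = β (·) e` and `φ = β x`. The Jacobi identity with `x` shows that `β` vanishes on `ker λ`,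
whence `β u v = λ u * φ v - φ u * λ v`. Splitting `L` along `(λ, φ) : L → K²` therefore identifies
it with `Kⁿ⁻¹ × K²`, the bracket depending only on the `K²`-coordinates, by the same formula for
every such `L` of a given dimension.
-/

open Module LinearMap

section Splitting

variable {K V P : Type*} [Field K] [AddCommGroup V] [Module K V] [AddCommGroup P] [Module K P]
  [FiniteDimensional K V] [FiniteDimensional K P]

lemma exists_linearEquiv_prod_of_comp_eq_id {m : ℕ} (hV : finrank K V = m + finrank K P)
    (G : V →ₗ[K] P) (s : P →ₗ[K] V) (hs : G ∘ₗ s = LinearMap.id) :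
    ∃ ψ : ((Fin m → K) × P) ≃ₗ[K] V, (∀ p, G (ψ p) = p.2) ∧ ∀ c, ψ (0, c) = s c := by
  let split := (exact_subtype_ker_map G).splitSurjectiveEquiv (ker G).injective_subtype
  let E := (split ⟨s, hs⟩).1
  have hGE : G = snd K _ P ∘ₗ E.toLinearMap := (split ⟨s, hs⟩).2.2
  have hEs : E.symm.toLinearMap ∘ₗ inr K _ P = s :=
    congrArg Subtype.val (split.symm_apply_apply ⟨s, hs⟩)
  have hker : finrank K (ker G) = finrank K (Fin m → K) := by
    have := E.finrank_eq
    rw [finrank_prod] at this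
    simp only [finrank_fin_fun]
    omega
  refine ⟨((LinearEquiv.ofFinrankEq _ _ hker).symm.prodCongr (LinearEquiv.refl K P)).trans E.symm,
    fun p => ?_, fun c => ?_⟩
  · simp [hGE]
  · simpa using congr($hEs c)

end Splitting

section LineValuedBracket

variable {K L : Type*} [Field K] [LieRing L] [LieAlgebra K L]

def BracketFactors (β : L →ₗ[K] L →ₗ[K] K) (e : L) : Prop :=
  ∀ y z, ⁅y, z⁆ = β y z • e

lemma exists_bracketFactors_of_finrank_derived_eq_one
    (hD : finrank K ↥(⁅(⊤ : LieIdeal K L), (⊤ : LieIdeal K L)⁆ : LieIdeal K L) = 1) :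
    ∃ (β : L →ₗ[K] L →ₗ[K] K) (e : L), BracketFactors β e ∧ e ≠ 0 ∧
      e ∈ ⁅(⊤ : LieIdeal K L), (⊤ : LieIdeal K L)⁆ ∧
      ∀ d ∈ ⁅(⊤ : LieIdeal K L), (⊤ : LieIdeal K L)⁆, ∃ c : K, c • e = d := by
  obtain ⟨⟨e, heD⟩, he, hspan⟩ := finrank_eq_one_iff'.mp hD
  have he : e ≠ 0 := by simpa using he
  have hDe : ∀ d ∈ ⁅(⊤ : LieIdeal K L), (⊤ : LieIdeal K L)⁆, ∃ c : K, c • e = d :=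
    fun d hd => (hspan ⟨d, hd⟩).imp fun c hc => congrArg Subtype.val hc
  obtain ⟨f, -, hfe⟩ :=
    exists_extend_of_notMem (0 : (⊥ : Submodule K L) →ₗ[K] K) (by simpa using he) 1
  refine ⟨(LieAlgebra.ad K L : L →ₗ[K] Module.End K L).compr₂ f, e, fun y z => ?_, he, heD, hDe⟩
  obtain ⟨c, hc⟩ :=
    hDe _ (LieSubmodule.lie_mem_lie (LieSubmodule.mem_top y) (LieSubmodule.mem_top z))
  simp [← hc, hfe]

namespace BracketFactors

variable {β : L →ₗ[K] L →ₗ[K] K} {e : L}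

lemma apply_self (hβ : BracketFactors β e) (he : e ≠ 0) (y : L) : β y y = 0 :=
  smul_left_injective K he <| show β y y • e = (0 : K) • e by rw [← hβ, lie_self, zero_smul]

lemma apply_swap (hβ : BracketFactors β e) (he : e ≠ 0) (y z : L) : β z y = -β y z :=
  smul_left_injective K he <| show β z y • e = (-β y z) • e by
    rw [neg_smul, ← hβ, ← hβ, lie_skew]

lemma apply_eq_zero_of_apply_right_eq_zero (hβ : BracketFactors β e) (he : e ≠ 0) {x : L}
    (hx : β x e = 1) {z w : L} (hz : β z e = 0) (hw : β w e = 0) : β z w = 0 := by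
  have hjacobi : ⁅x, ⁅z, w⁆⁆ = ⁅⁅x, z⁆, w⁆ + ⁅z, ⁅x, w⁆⁆ := leibniz_lie x z w
  rw [hβ z w, hβ x z, hβ x w, lie_smul, smul_lie, lie_smul, hβ x e, hβ e w, hβ z e,
    hβ.apply_swap he w e, hx, hz, hw] at hjacobi
  simpa [he] using hjacobi

lemma apply_eq_sub_mul (hβ : BracketFactors β e) (he : e ≠ 0) {x : L} (hx : β x e = 1)
    (u v : L) : β u v = β u e * β x v - β x u * β v e := by
  have hself := hβ.apply_self he
  have hex : β e x = -1 := by rw [hβ.apply_swap he, hx]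
  have hdecomp : ∀ y, ∃ y₀, β y₀ e = 0 ∧ β x y₀ = 0 ∧ y = β y e • x + β x y • e + y₀ := by
    intro y
    refine ⟨y - β y e • x - β x y • e, ?_, ?_, by abel⟩ <;> simp [hx, hself]
  obtain ⟨u₀, hu₀e, hxu₀, hu⟩ := hdecomp u
  obtain ⟨v₀, hv₀e, hxv₀, hv⟩ := hdecomp v
  have hu₀x : β u₀ x = 0 := by rw [hβ.apply_swap he, hxu₀, neg_zero]
  have hev₀ : β e v₀ = 0 := by rw [hβ.apply_swap he, hv₀e, neg_zero]
  have hu₀v₀ := hβ.apply_eq_zero_of_apply_right_eq_zero he hx hu₀e hv₀e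
  conv_lhs => rw [hu, hv]
  simp [hx, hex, hself, hu₀e, hxv₀, hu₀x, hev₀, hu₀v₀]
  ring

lemma exists_apply_eq_one (hβ : BracketFactors β e) (he : e ≠ 0)
    (heD : e ∈ ⁅(⊤ : LieIdeal K L), (⊤ : LieIdeal K L)⁆)
    (hDe : ∀ d ∈ ⁅(⊤ : LieIdeal K L), (⊤ : LieIdeal K L)⁆, ∃ c : K, c • e = d)
    (hnp : ⁅(⊤ : LieIdeal K L), (⁅(⊤ : LieIdeal K L), (⊤ : LieIdeal K L)⁆ : LieIdeal K L)⁆ =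
      ⁅(⊤ : LieIdeal K L), (⊤ : LieIdeal K L)⁆) :
    ∃ x, β x e = 1 := by
  obtain ⟨y, hy⟩ : ∃ y, β y e ≠ 0 := by
    by_contra! h
    have hbot : ⁅(⊤ : LieIdeal K L), (⁅(⊤ : LieIdeal K L), (⊤ : LieIdeal K L)⁆ : LieIdeal K L)⁆
        = ⊥ := by
      rw [LieSubmodule.lie_eq_bot_iff]
      intro y _ d hd
      obtain ⟨c, rfl⟩ := hDe d hd
      rw [lie_smul, hβ, h, zero_smul, smul_zero]
    rw [← hnp, hbot] at heD
    exact he ((LieSubmodule.mem_bot e).mp heD)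
  exact ⟨(β y e)⁻¹ • y, by simp [hy]⟩

end BracketFactors

lemma exists_linearEquiv_lie_eq [FiniteDimensional K L] {m : ℕ} (hL : finrank K L = m + 2)
    (hD : finrank K ↥(⁅(⊤ : LieIdeal K L), (⊤ : LieIdeal K L)⁆ : LieIdeal K L) = 1)
    (hnp : ⁅(⊤ : LieIdeal K L), (⁅(⊤ : LieIdeal K L), (⊤ : LieIdeal K L)⁆ : LieIdeal K L)⁆ =
      ⁅(⊤ : LieIdeal K L), (⊤ : LieIdeal K L)⁆) :
    ∃ ψ : ((Fin m → K) × K × K) ≃ₗ[K] L,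
      ∀ p q, ⁅ψ p, ψ q⁆ = (p.2.1 * q.2.2 - p.2.2 * q.2.1) • ψ (0, 0, 1) := by
  obtain ⟨β, e, hβ, he, heD, hDe⟩ := exists_bracketFactors_of_finrank_derived_eq_one hD
  obtain ⟨x, hx⟩ := hβ.exists_apply_eq_one he heD hDe hnp
  let G : L →ₗ[K] K × K := (β.flip e).prod (β x)
  let s : K × K →ₗ[K] L := (toSpanSingleton K L x).coprod (toSpanSingleton K L e)
  have hs : G ∘ₗ s = LinearMap.id := by
    ext <;> simp [G, s, hx, hβ.apply_self he]
  obtain ⟨ψ, hGψ, hψs⟩ := exists_linearEquiv_prod_of_comp_eq_id (by simpa using hL) G s hs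
  have hcoord p : β (ψ p) e = p.2.1 ∧ β x (ψ p) = p.2.2 := Prod.ext_iff.mp (hGψ p)
  refine ⟨ψ, fun p q => ?_⟩
  rw [hψs, hβ, hβ.apply_eq_sub_mul he hx, (hcoord p).1, (hcoord p).2, (hcoord q).1,
    (hcoord q).2]
  simp [s]

end LineValuedBracket

section Transport

variable {R M L₁ L₂ : Type*} [CommRing R] [AddCommGroup M] [Module R M]
  [LieRing L₁] [LieAlgebra R L₁] [LieRing L₂] [LieAlgebra R L₂]

def LieEquiv.ofLinearEquivsOfLieEq (ψ₁ : M ≃ₗ[R] L₁) (ψ₂ : M ≃ₗ[R] L₂) (B : M → M → M)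
    (h₁ : ∀ p q, ⁅ψ₁ p, ψ₁ q⁆ = ψ₁ (B p q)) (h₂ : ∀ p q, ⁅ψ₂ p, ψ₂ q⁆ = ψ₂ (B p q)) :
    L₁ ≃ₗ⁅R⁆ L₂ :=
  { ψ₁.symm.trans ψ₂ with
    map_lie' := fun {u v} => by
      obtain ⟨p, rfl⟩ := ψ₁.surjective u
      obtain ⟨q, rfl⟩ := ψ₁.surjective v
      simp [h₁, h₂] }

end Transport

/-- Any two complex Lie algebras of dimension `n + 1` (with `n ≥ 2`), each with
one-dimensional derived algebra `D(Lᵢ) = [Lᵢ, Lᵢ]` satisfying `[Lᵢ, D(Lᵢ)] = D(Lᵢ)`, are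
isomorphic as Lie algebras. -/
theorem anA1_unique_up_to_iso
    (n : ℕ) (hn : 2 ≤ n)
    (L₁ : Type*) [LieRing L₁] [LieAlgebra ℂ L₁] [FiniteDimensional ℂ L₁]
    (L₂ : Type*) [LieRing L₂] [LieAlgebra ℂ L₂] [FiniteDimensional ℂ L₂]
    (hdim₁ : Module.finrank ℂ L₁ = n + 1)
    (hD₁ : Module.finrank ℂ ↥(⁅(⊤ : LieIdeal ℂ L₁), (⊤ : LieIdeal ℂ L₁)⁆ : LieIdeal ℂ L₁) = 1)
    (hnp₁ : ⁅(⊤ : LieIdeal ℂ L₁),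
        (⁅(⊤ : LieIdeal ℂ L₁), (⊤ : LieIdeal ℂ L₁)⁆ : LieIdeal ℂ L₁)⁆ =
      ⁅(⊤ : LieIdeal ℂ L₁), (⊤ : LieIdeal ℂ L₁)⁆)
    (hdim₂ : Module.finrank ℂ L₂ = n + 1)
    (hD₂ : Module.finrank ℂ ↥(⁅(⊤ : LieIdeal ℂ L₂), (⊤ : LieIdeal ℂ L₂)⁆ : LieIdeal ℂ L₂) = 1)
    (hnp₂ : ⁅(⊤ : LieIdeal ℂ L₂),
        (⁅(⊤ : LieIdeal ℂ L₂), (⊤ : LieIdeal ℂ L₂)⁆ : LieIdeal ℂ L₂)⁆ =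
      ⁅(⊤ : LieIdeal ℂ L₂), (⊤ : LieIdeal ℂ L₂)⁆) :
    Nonempty (L₁ ≃ₗ⁅ℂ⁆ L₂) := by
  obtain ⟨ψ₁, h₁⟩ := exists_linearEquiv_lie_eq (m := n - 1) (by omega) hD₁ hnp₁
  obtain ⟨ψ₂, h₂⟩ := exists_linearEquiv_lie_eq (m := n - 1) (by omega) hD₂ hnp₂
  let B (p q : (Fin (n - 1) → ℂ) × ℂ × ℂ) : (Fin (n - 1) → ℂ) × ℂ × ℂ :=
    (p.2.1 * q.2.2 - p.2.2 * q.2.1) • (0, 0, 1)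
  exact ⟨.ofLinearEquivsOfLieEq ψ₁ ψ₂ B (fun p q => (h₁ p q).trans (map_smul ψ₁ _ _).symm)
    (fun p q => (h₂ p q).trans (map_smul ψ₂ _ _).symm)⟩
end

section
/- Let p ≥ 1 and let L be a finite-dimensional complex Lie algebra. Suppose I is a one-dimensional ideal of L with [L, I] = I, and suppose there exist u_1, …, u_{2p+1} ∈ L whose cosets form a basis of L/I and satisfy: [u_{2l−1}, u_{2l}] − u_{2p+1} ∈ I for l = 1, …, p, and [u_i, u_j] ∈ I for every other pair i < j. Then L has a basis {x_1, …, x_{2p+1}, y} with I = Span{y} such that [x_{2l−1}, x_{2l}] = x_{2p+1} for l = 1, …, p, [x_1, y] = y, [x_i, y] = 0 for i = 2, …, 2p+1, and [x_i, x_j] = 0 for all other pairs i < j with (i, j) ≠ (2l−1, 2l). -/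
/-!
The eigenvalue functional `χ` of the one-dimensional ideal `I = K ∙ y`, `⁅v, y⁆ = χ v • y`, is a
character of `L`; it is nonzero because `⁅L, I⁆ = I`, and it descends to `L ⧸ I ≅ H_p`. Relabelling
the canonical pairs, an `SL₂`-move on one pair and a symplectic projection produce a Heisenberg
basis of `L ⧸ I` on which `χ` is `1` at `x₀` and `0` elsewhere. To lift its relations exactly, let
`D = ad x₀`: as `D² L ⊆ I` and `D` is the identity on `I`, we get `D³ = D²`, so `ker D²` is a
subalgebra meeting `I` trivially, and `v ↦ v - D² v` moves lifts into it without changing them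
modulo `I`.
-/

open Submodule Module

/-- `w (2 * l)`, `w (2 * l + 1)` for `l < p` are the canonical pairs and `w (2 * p)` is the
central element; the values of `w` beyond `2 * p` play no role. -/
structure IsHeisenbergFamily {H : Type*} [LieRing H] (p : ℕ) (w : ℕ → H) : Prop where
  lie_pair : ∀ l < p, ⁅w (2 * l), w (2 * l + 1)⁆ = w (2 * p)
  lie_eq_zero : ∀ a ≤ 2 * p, ∀ b ≤ 2 * p, a / 2 ≠ b / 2 → ⁅w a, w b⁆ = 0

def pairPerm (τ : ℕ → ℕ) (n : ℕ) : ℕ := 2 * τ (n / 2) + n % 2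

namespace IsHeisenbergFamily

section CommRing

variable {K H : Type*} [CommRing K] [LieRing H] [LieAlgebra K H] {p : ℕ} {w : ℕ → H}

theorem lie_zero_one (hw : IsHeisenbergFamily p w) (hp : 1 ≤ p) : ⁅w 0, w 1⁆ = w (2 * p) :=
  hw.lie_pair 0 hp

theorem of_fin {u : Fin (2 * p + 1) → H}
    (hpair : ∀ l : ℕ, ∀ hl : l < p,
      ⁅u ⟨2 * l, by omega⟩, u ⟨2 * l + 1, by omega⟩⁆ = u ⟨2 * p, by omega⟩)
    (hother : ∀ i j : Fin (2 * p + 1), i < j →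
      (∀ l : ℕ, l < p → ¬(i.val = 2 * l ∧ j.val = 2 * l + 1)) → ⁅u i, u j⁆ = 0) :
    IsHeisenbergFamily p (Function.extend Fin.val u 0) := by
  have hu (i : Fin (2 * p + 1)) : Function.extend Fin.val u 0 i = u i :=
    Fin.val_injective.extend_apply u 0 i
  refine ⟨fun l hl => ?_, fun a ha b hb hab => ?_⟩
  · have h := hpair l hl
    rwa [← hu, ← hu, ← hu] at h
  · obtain ⟨i, rfl⟩ : ∃ i : Fin (2 * p + 1), i.val = a := ⟨⟨a, by omega⟩, rfl⟩
    obtain ⟨j, rfl⟩ : ∃ j : Fin (2 * p + 1), j.val = b := ⟨⟨b, by omega⟩, rfl⟩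
    rw [hu, hu]
    rcases lt_or_gt_of_ne (show i ≠ j by rintro rfl; exact hab rfl) with h | h
    · exact hother i j h fun l _ => by omega
    · rw [← lie_skew, hother j i h fun l _ => by omega, neg_zero]

theorem lie_eq_zero_of_lt (hw : IsHeisenbergFamily p w) {a b : ℕ} (hab : a < b) (hb : b ≤ 2 * p)
    (h : ∀ l < p, ¬(a = 2 * l ∧ b = 2 * l + 1)) : ⁅w a, w b⁆ = 0 :=
  hw.lie_eq_zero a (by omega) b hb fun h' => h (a / 2) (by omega) (by omega)

theorem comp_pairPerm (hw : IsHeisenbergFamily p w) {τ : ℕ → ℕ} (hτ : τ.Injective)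
    (hτp : τ p = p) (hτlt : ∀ l < p, τ l < p) : IsHeisenbergFamily p (w ∘ pairPerm τ) := by
  have hle (a : ℕ) (ha : a ≤ 2 * p) : pairPerm τ a ≤ 2 * p := by
    rcases (show a / 2 < p ∨ a = 2 * p by omega) with h | rfl
    · have := hτlt _ h
      unfold pairPerm
      omega
    · simp [pairPerm, hτp]
  refine ⟨fun l hl => ?_, fun a ha b hb hab => ?_⟩
  · simpa [pairPerm, Nat.mul_add_div, hτp] using hw.lie_pair (τ l) (hτlt l hl)
  · refine hw.lie_eq_zero _ (hle a ha) _ (hle b hb) ?_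
    simpa [pairPerm, Nat.mul_add_div] using hτ.ne hab

theorem update_pair_zero (hw : IsHeisenbergFamily p w) (hp : 1 ≤ p) {a b c d : K}
    (h : a * d - b * c = 1) :
    IsHeisenbergFamily p fun n =>
      if n = 0 then a • w 0 + b • w 1 else if n = 1 then c • w 0 + d • w 1 else w n := by
  have h0 (n : ℕ) (hn : n ≤ 2 * p) (h2 : 2 ≤ n) : ⁅w 0, w n⁆ = 0 :=
    hw.lie_eq_zero 0 (by omega) n hn (by omega)
  have h1 (n : ℕ) (hn : n ≤ 2 * p) (h2 : 2 ≤ n) : ⁅w 1, w n⁆ = 0 :=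
    hw.lie_eq_zero 1 (by omega) n hn (by omega)
  refine ⟨fun l hl => ?_, fun i hi j hj hij => ?_⟩
  · rcases Nat.eq_zero_or_pos l with rfl | hl0
    · simp only [mul_zero, zero_add, if_pos, one_ne_zero, if_false]
      rw [if_neg (by omega), if_neg (by omega), ← hw.lie_zero_one hp]
      simp only [lie_add, add_lie, lie_smul, smul_lie, lie_self]
      rw [← lie_skew (w 1)]
      linear_combination (norm := module) h • ⁅w 0, w 1⁆
    · simp only [if_neg (show 2 * l ≠ 0 by omega), if_neg (show 2 * l ≠ 1 by omega),
        if_neg (show 2 * l + 1 ≠ 0 by omega), if_neg (show 2 * l + 1 ≠ 1 by omega),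
        if_neg (show 2 * p ≠ 0 by omega), if_neg (show 2 * p ≠ 1 by omega)]
      exact hw.lie_pair l hl
  · rcases (show i < 2 ∨ j < 2 ∨ (2 ≤ i ∧ 2 ≤ j) by omega) with hi2 | hj2 | ⟨hi2, hj2⟩
    · interval_cases i <;> simp [if_neg (show j ≠ 0 by omega), if_neg (show j ≠ 1 by omega),
        add_lie, h0 j hj (by omega), h1 j hj (by omega)]
    · rw [← lie_skew, neg_eq_zero]
      interval_cases j <;> simp [if_neg (show i ≠ 0 by omega), if_neg (show i ≠ 1 by omega),
        add_lie, h0 i hi (by omega), h1 i hi (by omega)]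
    · simp only [if_neg (show i ≠ 0 by omega), if_neg (show i ≠ 1 by omega),
        if_neg (show j ≠ 0 by omega), if_neg (show j ≠ 1 by omega)]
      exact hw.lie_eq_zero i hi j hj hij

/-- The vector on the left represents `g` through the symplectic form `⁅·, ·⁆` of the family. -/
theorem lie_sum_smul_sub_smul (hw : IsHeisenbergFamily p w) (g : H →ₗ[K] K)
    (hgz : g (w (2 * p)) = 0) {b : ℕ} (hb : b ≤ 2 * p) :
    ⁅∑ l ∈ Finset.range p, (g (w (2 * l + 1)) • w (2 * l) - g (w (2 * l)) • w (2 * l + 1)), w b⁆ =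
      g (w b) • w (2 * p) := by
  rw [sum_lie, Finset.sum_eq_single (b / 2)]
  · obtain ⟨m, rfl | rfl⟩ : ∃ m, b = 2 * m ∨ b = 2 * m + 1 := ⟨b / 2, by omega⟩
    · rw [show 2 * m / 2 = m by omega, sub_lie, smul_lie, smul_lie, lie_self, smul_zero,
        zero_sub, ← smul_neg, lie_skew]
      rcases (show m < p ∨ m = p by omega) with hm | rfl
      · rw [hw.lie_pair m hm]
      · rw [hgz, zero_smul, zero_smul]
    · rw [show (2 * m + 1) / 2 = m by omega, sub_lie, smul_lie, smul_lie, lie_self, smul_zero,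
        sub_zero, hw.lie_pair m (by omega)]
  · intro l hl _
    rw [Finset.mem_range] at hl
    rw [sub_lie, smul_lie, smul_lie, hw.lie_eq_zero _ (by omega) b hb (by omega),
      hw.lie_eq_zero _ (by omega) b hb (by omega), smul_zero, smul_zero, sub_zero]
  · intro hbp
    rw [Finset.mem_range, not_lt] at hbp
    obtain rfl : b = 2 * p := by omega
    rw [show 2 * p / 2 = p by omega, hgz, zero_smul, sub_zero, smul_lie, lie_self, smul_zero]

theorem exists_adapted_of_apply_zero_eq_one (hw : IsHeisenbergFamily p w) (hp : 1 ≤ p)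
    (g : H →ₗ[K] K) (hgz : g (w (2 * p)) = 0) (hg0 : g (w 0) = 1) :
    ∃ v : ℕ → H, IsHeisenbergFamily p v ∧ v (2 * p) = w (2 * p) ∧ g (v 0) = 1 ∧
      ∀ n ≠ 0, g (v n) = 0 := by
  set t := ∑ l ∈ Finset.range p, (g (w (2 * l + 1)) • w (2 * l) - g (w (2 * l)) • w (2 * l + 1))
  have ht (b : ℕ) (hb : b ≤ 2 * p) : ⁅t, w b⁆ = g (w b) • w (2 * p) :=
    hw.lie_sum_smul_sub_smul g hgz hb
  have hgt : g t = 0 := by simp [t, mul_comm]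
  set v : ℕ → H := fun n => if n = 0 then w 0 else if n = 1 then -t else w n - g (w n) • w 0
  have hv (n : ℕ) (hn : 2 ≤ n) : v n = w n - g (w n) • w 0 := by
    simp only [v, if_neg (show n ≠ 0 by omega), if_neg (show n ≠ 1 by omega)]
  have hv2p : v (2 * p) = w (2 * p) := by rw [hv _ (by omega), hgz, zero_smul, sub_zero]
  have hw0 (n : ℕ) (hn : n ≤ 2 * p) (h2 : 2 ≤ n) : ⁅w 0, w n⁆ = 0 :=
    hw.lie_eq_zero 0 (by omega) n hn (by omega)
  have hvv (a b : ℕ) (ha : a ≤ 2 * p) (hb : b ≤ 2 * p) (ha2 : 2 ≤ a) (hb2 : 2 ≤ b) :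
      ⁅v a, v b⁆ = ⁅w a, w b⁆ := by
    rw [hv a ha2, hv b hb2]
    simp only [sub_lie, lie_sub, smul_lie, lie_smul, lie_self, hw0 b hb hb2, ← lie_skew (w a),
      hw0 a ha ha2]
    simp
  refine ⟨v, ⟨fun l hl => ?_, fun i hi j hj hij => ?_⟩, hv2p, by simp [v, hg0], fun n hn => ?_⟩
  · rw [hv2p]
    rcases Nat.eq_zero_or_pos l with rfl | hl0
    · simp only [v, mul_zero, zero_add, if_true, one_ne_zero, if_false, lie_neg]
      rw [← lie_skew, neg_neg, ht 0 (by omega), hg0, one_smul]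
    · rw [hvv _ _ (by omega) (by omega) (by omega) (by omega), hw.lie_pair l hl]
  · wlog hij' : i < j generalizing i j
    · rw [← lie_skew, this j hj i hi hij.symm (by omega), neg_zero]
    rcases (show i = 0 ∨ i = 1 ∨ 2 ≤ i by omega) with rfl | rfl | hi2
    · rw [hv j (by omega)]
      simp [v, lie_sub, hw0 j hj (by omega)]
    · rw [hv j (by omega)]
      simp [v, lie_sub, ht j hj, ht 0 (by omega), hg0]
    · rw [hvv i j hi hj hi2 (by omega), hw.lie_eq_zero i hi j hj hij]
  · rcases (show n = 1 ∨ 2 ≤ n by omega) with rfl | hn2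
    · simp [v, hgt]
    · simp [hv n hn2, hg0]

theorem lie_lie_zero_eq_zero (hw : IsHeisenbergFamily p w) (hp : 1 ≤ p)
    (hspan : span K (Set.range fun i : Fin (2 * p + 1) => w i) = ⊤) (v : H) :
    ⁅w 0, ⁅w 0, v⁆⁆ = 0 := by
  have h : LieAlgebra.ad K H (w 0) ∘ₗ LieAlgebra.ad K H (w 0) = 0 := by
    refine LinearMap.ext_on_range hspan fun i => ?_
    simp only [LinearMap.comp_apply, LieAlgebra.ad_apply, LinearMap.zero_apply]
    rcases (show i.val = 0 ∨ i.val = 1 ∨ 2 ≤ i.val by omega) with hi | hi | hi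
    · rw [hi, lie_self, lie_zero]
    · rw [hi, hw.lie_zero_one hp, hw.lie_eq_zero _ (by omega) _ le_rfl (by omega)]
    · rw [hw.lie_eq_zero 0 (by omega) i (by omega) (by omega), lie_zero]
  simpa using LinearMap.congr_fun h v

end CommRing

section Field

variable {K H : Type*} [Field K] [LieRing H] [LieAlgebra K H] {p : ℕ} {w : ℕ → H}

theorem exists_apply_zero_eq_one (hw : IsHeisenbergFamily p w) (hp : 1 ≤ p) (g : H →ₗ[K] K)
    {k : ℕ} (hk : k < 2 * p) (hgk : g (w k) ≠ 0) :
    ∃ v : ℕ → H, IsHeisenbergFamily p v ∧ v (2 * p) = w (2 * p) ∧ g (v 0) = 1 := by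
  set τ := Equiv.swap 0 (k / 2)
  have hτp : τ p = p := Equiv.swap_apply_of_ne_of_ne (by omega) (by omega)
  have hw' := hw.comp_pairPerm τ.injective hτp fun l hl => by
    rw [Equiv.swap_apply_def]; split_ifs <;> omega
  set w' := w ∘ pairPerm τ
  have hk' : w' (k % 2) = w k := by
    simp only [w', Function.comp_apply, pairPerm, show k % 2 / 2 = 0 by omega, τ,
      Equiv.swap_apply_left]
    congr 1; omega
  have h2p : w' (2 * p) = w (2 * p) := by
    simp only [w', Function.comp_apply, pairPerm, Nat.mul_div_cancel_left _ two_pos, hτp]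
    congr 1; omega
  have h2p0 : 2 * p ≠ 0 := by omega
  have h2p1 : 2 * p ≠ 1 := by omega
  by_cases h0 : g (w' 0) = 0
  · have h1 : g (w' 1) ≠ 0 := by
      rcases Nat.mod_two_eq_zero_or_one k with h | h <;> rw [h] at hk'
      exacts [absurd (hk' ▸ h0) hgk, hk' ▸ hgk]
    exact ⟨_, hw'.update_pair_zero hp (a := 0) (b := (g (w' 1))⁻¹) (c := -g (w' 1)) (d := 0)
      (by field_simp; norm_num), by simp [h2p0, h2p1, h2p], by simp [h1]⟩
  · exact ⟨_, hw'.update_pair_zero hp (a := (g (w' 0))⁻¹) (b := 0) (c := 0) (d := g (w' 0))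
      (by field_simp; norm_num), by simp [h2p0, h2p1, h2p], by simp [h0]⟩

theorem exists_adapted (hw : IsHeisenbergFamily p w) (hp : 1 ≤ p) (g : H →ₗ[K] K)
    (hgz : g (w (2 * p)) = 0) {k : ℕ} (hk : k ≤ 2 * p) (hgk : g (w k) ≠ 0) :
    ∃ v : ℕ → H, IsHeisenbergFamily p v ∧ v (2 * p) = w (2 * p) ∧ g (v 0) = 1 ∧
      ∀ n ≠ 0, g (v n) = 0 := by
  have hk' : k < 2 * p := lt_of_le_of_ne hk fun h => hgk (h ▸ hgz)
  obtain ⟨v, hv, hv2p, hv0⟩ := hw.exists_apply_zero_eq_one hp g hk' hgk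
  obtain ⟨v', hv', hv'2p, hv'0, hv'n⟩ :=
    hv.exists_adapted_of_apply_zero_eq_one hp g (hv2p ▸ hgz) hv0
  exact ⟨v', hv', hv'2p.trans hv2p, hv'0, hv'n⟩

theorem linearIndependent (hw : IsHeisenbergFamily p w) (hz : w (2 * p) ≠ 0) :
    LinearIndependent K fun i : Fin (2 * p + 1) => w i := by
  rw [Fintype.linearIndependent_iff]
  intro c hc
  -- bracketing the relation with the partner `w j` of `w i` leaves only `c i • ⁅w i, w j⁆`
  have hpartner (i j : Fin (2 * p + 1)) (hij : i.val / 2 = j.val / 2) (hne : i ≠ j) :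
      c i • ⁅w i, w j⁆ = 0 := by
    have hsum := congrArg (⁅·, w j⁆) hc
    simp only [sum_lie, smul_lie, zero_lie] at hsum
    rwa [Finset.sum_eq_single i (fun k _ hki => ?_) (by simp)] at hsum
    by_cases hkj : k = j
    · rw [hkj, lie_self, smul_zero]
    · rw [hw.lie_eq_zero _ (by omega) _ (by omega) (by omega), smul_zero]
  have hlow (i : Fin (2 * p + 1)) (hi : i.val < 2 * p) : c i = 0 := by
    obtain ⟨m, hm | hm⟩ : ∃ m, i.val = 2 * m ∨ i.val = 2 * m + 1 := ⟨i.val / 2, by omega⟩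
    · have h := hpartner i ⟨2 * m + 1, by omega⟩ (by simp only; omega)
        (by simp [Fin.ext_iff]; omega)
      rw [show w i = w (2 * m) by rw [hm], hw.lie_pair m (by omega)] at h
      exact (smul_eq_zero.mp h).resolve_right hz
    · have h := hpartner i ⟨2 * m, by omega⟩ (by simp only; omega) (by simp [Fin.ext_iff]; omega)
      rw [show w i = w (2 * m + 1) by rw [hm], ← lie_skew, hw.lie_pair m (by omega)] at h
      exact (smul_eq_zero.mp h).resolve_right (neg_ne_zero.mpr hz)
  intro i
  by_cases hi : i.val < 2 * p
  · exact hlow i hi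
  · rw [Finset.sum_eq_single i (fun k _ hki => by rw [hlow k (by omega), zero_smul]) (by simp),
      show (i : ℕ) = 2 * p by omega] at hc
    exact (smul_eq_zero.mp hc).resolve_right hz

theorem exists_adapted_of_finrank_eq (hw : IsHeisenbergFamily p w) (hp : 1 ≤ p)
    (hz : w (2 * p) ≠ 0) (hH : finrank K H = 2 * p + 1) {g : H →ₗ[K] K}
    (hg : ∀ a b : H, g ⁅a, b⁆ = 0) (hg0 : g ≠ 0) :
    ∃ v : ℕ → H, IsHeisenbergFamily p v ∧ LinearIndependent K (fun i : Fin (2 * p + 1) => v i) ∧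
      span K (Set.range fun i : Fin (2 * p + 1) => v i) = ⊤ ∧ g (v 0) = 1 ∧
      ∀ n ≠ 0, g (v n) = 0 := by
  have hspan {v : ℕ → H} (hv : IsHeisenbergFamily p v) (hvz : v (2 * p) ≠ 0) :
      span K (Set.range fun i : Fin (2 * p + 1) => v i) = ⊤ :=
    (hv.linearIndependent hvz).span_eq_top_of_card_eq_finrank (by simp [hH])
  obtain ⟨k, hk⟩ : ∃ i : Fin (2 * p + 1), g (w i) ≠ 0 := by
    by_contra! h
    exact hg0 (LinearMap.ext_on_range (hspan hw hz) h)
  have hgz : g (w (2 * p)) = 0 := hw.lie_zero_one hp ▸ hg _ _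
  obtain ⟨v, hv, hvz, hv0, hvn⟩ := hw.exists_adapted hp g hgz (by omega) hk
  exact ⟨v, hv, hv.linearIndependent (hvz ▸ hz), hspan hv (hvz ▸ hz), hv0, hvn⟩

end Field

end IsHeisenbergFamily

section Lift

variable {K L : Type*} [CommRing K] [LieRing L] [LieAlgebra K L] {I : LieIdeal K L} {x : L}

theorem lie_lie_lie_eq (hI : ∀ v ∈ I, ⁅x, v⁆ = v) (hD : ∀ v, ⁅x, ⁅x, v⁆⁆ ∈ I) (v : L) :
    ⁅x, ⁅x, ⁅x, v⁆⁆⁆ = ⁅x, ⁅x, v⁆⁆ :=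
  hI _ (hD v)

theorem lie_lie_lie_eq_zero (hI : ∀ v ∈ I, ⁅x, v⁆ = v) (hD : ∀ v, ⁅x, ⁅x, v⁆⁆ ∈ I) {a b : L}
    (ha : ⁅x, ⁅x, a⁆⁆ = 0) (hb : ⁅x, ⁅x, b⁆⁆ = 0) : ⁅x, ⁅x, ⁅a, b⁆⁆⁆ = 0 := by
  have h : ⁅x, ⁅⁅x, a⁆, ⁅x, b⁆⁆⁆ = 0 := by rw [leibniz_lie, ha, hb, zero_lie, lie_zero, add_zero]
  -- `D² ⁅a, b⁆ = D³ ⁅a, b⁆`, and by Leibniz every term of `D³ ⁅a, b⁆` contains `D² a` or `D² b`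
  rw [← lie_lie_lie_eq hI hD, leibniz_lie x a b, lie_add, lie_add, leibniz_lie x ⁅x, a⁆ b,
    leibniz_lie x a ⁅x, b⁆, ha, hb, zero_lie, lie_zero, zero_add, add_zero, h, add_zero]

theorem lie_lie_sub_lie_lie_eq_zero (hI : ∀ v ∈ I, ⁅x, v⁆ = v) (hD : ∀ v, ⁅x, ⁅x, v⁆⁆ ∈ I)
    (v : L) : ⁅x, ⁅x, v - ⁅x, ⁅x, v⁆⁆⁆⁆ = 0 := by
  rw [lie_sub, lie_sub, lie_lie_lie_eq hI hD ⁅x, v⁆, lie_lie_lie_eq hI hD, sub_self]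

theorem mk_sub_lie_lie (hD : ∀ v, ⁅x, ⁅x, v⁆⁆ ∈ I) (v : L) :
    LieSubmodule.Quotient.mk (N := I) (v - ⁅x, ⁅x, v⁆⁆) = LieSubmodule.Quotient.mk v := by
  rw [Submodule.Quotient.eq, sub_sub_cancel_left]
  exact neg_mem (hD v)

theorem eq_of_sub_mem_of_lie_lie_eq_zero (hI : ∀ v ∈ I, ⁅x, v⁆ = v) {u v : L}
    (hu : ⁅x, ⁅x, u⁆⁆ = 0) (hv : ⁅x, ⁅x, v⁆⁆ = 0) (h : u - v ∈ I) : u = v := by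
  have huv : ⁅x, ⁅x, u - v⁆⁆ = 0 := by rw [lie_sub, lie_sub, hu, hv, sub_zero]
  rwa [hI _ h, hI _ h, sub_eq_zero] at huv

theorem IsHeisenbergFamily.sub_lie_lie {p : ℕ} {w : ℕ → L}
    (hw : IsHeisenbergFamily p fun n => LieSubmodule.Quotient.mk (N := I) (w n))
    (hI : ∀ v ∈ I, ⁅x, v⁆ = v) (hD : ∀ v, ⁅x, ⁅x, v⁆⁆ ∈ I) :
    IsHeisenbergFamily p fun n => w n - ⁅x, ⁅x, w n⁆⁆ := by
  set X := fun n => w n - ⁅x, ⁅x, w n⁆⁆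
  have hX (n : ℕ) : ⁅x, ⁅x, X n⁆⁆ = 0 := lie_lie_sub_lie_lie_eq_zero hI hD (w n)
  have hrel {a b : ℕ} {v : L} (h : ⁅LieSubmodule.Quotient.mk (N := I) (w a),
      LieSubmodule.Quotient.mk (N := I) (w b)⁆ = LieSubmodule.Quotient.mk (N := I) v)
      (hv : ⁅x, ⁅x, v⁆⁆ = 0) : ⁅X a, X b⁆ = v := by
    refine eq_of_sub_mem_of_lie_lie_eq_zero hI (lie_lie_lie_eq_zero hI hD (hX a) (hX b)) hv
      ((Submodule.Quotient.eq (I : Submodule K L)).mp ?_)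
    change LieSubmodule.Quotient.mk (N := I) ⁅X a, X b⁆ = LieSubmodule.Quotient.mk v
    rw [LieSubmodule.Quotient.mk_bracket, mk_sub_lie_lie hD, mk_sub_lie_lie hD, h]
  exact ⟨fun l hl => hrel ((hw.lie_pair l hl).trans (mk_sub_lie_lie hD _).symm) (hX _),
    fun a ha b hb hab => hrel (v := 0) (by simpa using hw.lie_eq_zero a ha b hb hab) (by simp)⟩

theorem IsHeisenbergFamily.exists_lift {p : ℕ} {w : ℕ → L ⧸ I} (hw : IsHeisenbergFamily p w)
    (hp : 1 ≤ p) (hspan : span K (Set.range fun i : Fin (2 * p + 1) => w i) = ⊤)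
    (hx : LieSubmodule.Quotient.mk x = w 0) (hI : ∀ v ∈ I, ⁅x, v⁆ = v) :
    ∃ X : ℕ → L, IsHeisenbergFamily p X ∧ ∀ n, LieSubmodule.Quotient.mk (N := I) (X n) = w n := by
  choose u hu using fun n => LieSubmodule.Quotient.surjective_mk' I (w n)
  have hD (v : L) : ⁅x, ⁅x, v⁆⁆ ∈ I := by
    rw [← LieSubmodule.Quotient.mk_eq_zero', LieSubmodule.Quotient.mk_bracket,
      LieSubmodule.Quotient.mk_bracket, hx]
    exact hw.lie_lie_zero_eq_zero hp hspan _
  have hu' : (fun n => LieSubmodule.Quotient.mk (N := I) (u n)) = w := funext hu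
  exact ⟨_, (hu' ▸ hw).sub_lie_lie hI hD, fun n => (mk_sub_lie_lie hD _).trans (hu n)⟩

end Lift

section OneDimensional

variable {K L M : Type*} [Field K] [LieRing L] [LieAlgebra K L] [AddCommGroup M] [Module K M]
  [LieRingModule L M] [LieModule K L M]

theorem LieModule.exists_lie_eq_smul_of_finrank_eq_one (h : finrank K M = 1) :
    ∃ χ : L →ₗ[K] K, ∀ (x : L) (m : M), ⁅x, m⁆ = χ x • m := by
  set e := LinearEquiv.smul_id_of_finrank_eq_one h
  refine ⟨e.symm.toLinearMap ∘ₗ (LieModule.toEnd K L M : L →ₗ[K] Module.End K M), fun x m => ?_⟩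
  calc ⁅x, m⁆ = e (e.symm (LieModule.toEnd K L M x)) m := by rw [e.apply_symm_apply]; rfl
    _ = _ := by rw [LinearEquiv.smul_id_of_finrank_eq_one_apply]; rfl

theorem apply_lie_eq_zero_of_lie_eq_smul {m : M} (hm : m ≠ 0) {χ : L →ₗ[K] K}
    (hχ : ∀ x : L, ⁅x, m⁆ = χ x • m) (a b : L) : χ ⁅a, b⁆ = 0 := by
  have h : χ ⁅a, b⁆ • m = 0 := by
    rw [← hχ, lie_lie, hχ, hχ, lie_smul, lie_smul, hχ, hχ, smul_smul, smul_smul, mul_comm,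
      sub_self]
  exact (smul_eq_zero.mp h).resolve_right hm

theorem linearIndependent_sumElim_singleton {ι : Type*} {N : Submodule K M} {x : ι → M}
    (hx : LinearIndependent K fun i => Submodule.Quotient.mk (p := N) (x i)) {y : M}
    (hyN : y ∈ N) (hy : y ≠ 0) : LinearIndependent K (Sum.elim x ![y]) := by
  have hy' : LinearIndependent K ![(⟨y, hyN⟩ : N)] :=
    linearIndependent_unique_iff.mpr (by simpa using hy)
  refine (linearIndependent_equiv' (Equiv.sumComm (Fin 1) ι) ?_).mp (hy'.sumElim_of_quotient x hx)
  ext (i | i) <;> simp [Fin.fin_one_eq_zero]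

namespace LieIdeal

variable {I : LieIdeal K L} {y : L} {χ : L →ₗ[K] K}

theorem exists_lie_eq_smul_of_finrank_eq_one (h : finrank K I = 1) :
    ∃ (y : L) (χ : L →ₗ[K] K), y ≠ 0 ∧ (I : Submodule K L) = K ∙ y ∧
      ∀ v : L, ⁅v, y⁆ = χ v • y := by
  obtain ⟨χ, hχ⟩ := LieModule.exists_lie_eq_smul_of_finrank_eq_one (L := L) h
  have : Nontrivial I := Module.nontrivial_of_finrank_eq_succ h
  obtain ⟨m, hm⟩ := exists_ne (0 : I)
  have hm' : (m : L) ≠ 0 := by simpa using hm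
  exact ⟨m, χ, hm', eq_span_singleton_of_mem_of_finrank_eq_one h m.2 hm',
    fun v => congrArg Subtype.val (hχ v m)⟩

theorem le_ker_of_lie_eq_smul (hy : y ≠ 0) (hIy : (I : Submodule K L) = K ∙ y)
    (hχ : ∀ v : L, ⁅v, y⁆ = χ v • y) : (I : Submodule K L) ≤ LinearMap.ker χ := by
  rw [hIy, span_le, Set.singleton_subset_iff, SetLike.mem_coe, LinearMap.mem_ker]
  exact (smul_eq_zero.mp ((hχ y).symm.trans (lie_self y))).resolve_right hy

theorem ne_zero_of_top_lie_eq_self (hI : ⁅(⊤ : LieIdeal K L), I⁆ = I) (hy : y ≠ 0)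
    (hIy : (I : Submodule K L) = K ∙ y) (hχ : ∀ v : L, ⁅v, y⁆ = χ v • y) : χ ≠ 0 := by
  rintro rfl
  have hbot : ⁅(⊤ : LieIdeal K L), I⁆ = ⊥ := by
    refine (LieSubmodule.lie_eq_bot_iff _ _).mpr fun v _ m hm => ?_
    obtain ⟨c, rfl⟩ := mem_span_singleton.mp (show m ∈ K ∙ y from hIy ▸ hm)
    simp [hχ]
  have hyI : y ∈ I := (hIy ▸ mem_span_singleton_self y :)
  rw [← hI, hbot, LieSubmodule.mem_bot] at hyI
  exact hy hyI

theorem exists_lie_eq_smul_of_finrank_eq_one_of_top_lie_eq_self (h : finrank K I = 1)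
    (hI : ⁅(⊤ : LieIdeal K L), I⁆ = I) :
    ∃ (y : L) (g : L ⧸ I →ₗ[K] K), y ≠ 0 ∧ (I : Submodule K L) = K ∙ y ∧
      (∀ v : L, ⁅v, y⁆ = g (LieSubmodule.Quotient.mk v) • y) ∧
      (∀ a b : L ⧸ I, g ⁅a, b⁆ = 0) ∧ g ≠ 0 := by
  obtain ⟨y, χ, hy, hIy, hχ⟩ := exists_lie_eq_smul_of_finrank_eq_one h
  refine ⟨y, Submodule.liftQ _ χ (le_ker_of_lie_eq_smul hy hIy hχ), hy, hIy, hχ, fun a b => ?_,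
    fun hg => ne_zero_of_top_lie_eq_self hI hy hIy hχ ?_⟩
  · obtain ⟨a, rfl⟩ := LieSubmodule.Quotient.surjective_mk' I a
    obtain ⟨b, rfl⟩ := LieSubmodule.Quotient.surjective_mk' I b
    exact apply_lie_eq_zero_of_lie_eq_smul hy hχ a b
  · exact LinearMap.ext fun v => LinearMap.congr_fun hg (LieSubmodule.Quotient.mk v)

theorem lie_eq_self_of_mem (hIy : (I : Submodule K L) = K ∙ y) {x : L} (hxy : ⁅x, y⁆ = y)
    {v : L} (hv : v ∈ I) : ⁅x, v⁆ = v := by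
  obtain ⟨c, rfl⟩ := mem_span_singleton.mp (show v ∈ K ∙ y from hIy ▸ hv)
  rw [lie_smul, hxy]

end LieIdeal

end OneDimensional

/-- Structure theorem for H_p-A(1) algebras. If `I` is a one-dimensional
ideal of a finite-dimensional complex Lie algebra `L` with `[L, I] = I`, and
`u_0, …, u_{2p}` are elements whose cosets form a basis of `L/I` with
`[u_{2l}, u_{2l+1}] − u_{2p} ∈ I` (for `l < p`) and `[u_i, u_j] ∈ I` for every other pair
`i < j`, then `L` has a basis `{x_0, …, x_{2p}, y}` with `I = Span{y}`,
`[x_{2l}, x_{2l+1}] = x_{2p}` for `l < p`, `[x_0, y] = y`, `[x_i, y] = 0` for `i ≠ 0`,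
and all other brackets of pairs of basis elements zero. -/
theorem hpA1_structure
    (p : ℕ) (hp : 1 ≤ p)
    (L : Type*) [LieRing L] [LieAlgebra ℂ L] [FiniteDimensional ℂ L]
    (I : LieIdeal ℂ L) (hdimI : Module.finrank ℂ I = 1)
    (hnp : ⁅(⊤ : LieIdeal ℂ L), I⁆ = I)
    (u : Fin (2 * p + 1) → L)
    (hu_li : LinearIndependent ℂ fun i => (LieSubmodule.Quotient.mk (N := I) (u i) : L ⧸ I))
    (hu_span : Submodule.span ℂ
      (Set.range fun i => (LieSubmodule.Quotient.mk (N := I) (u i) : L ⧸ I)) = ⊤)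
    (hpair : ∀ l : ℕ, ∀ hl : l < p,
      ⁅u ⟨2 * l, by omega⟩, u ⟨2 * l + 1, by omega⟩⁆ - u ⟨2 * p, by omega⟩ ∈ I)
    (hother : ∀ i j : Fin (2 * p + 1), i < j →
      (∀ l : ℕ, l < p → ¬(i.val = 2 * l ∧ j.val = 2 * l + 1)) → ⁅u i, u j⁆ ∈ I) :
    ∃ (x : Fin (2 * p + 1) → L) (y : L),
      (I : Submodule ℂ L) = Submodule.span ℂ {y} ∧
      LinearIndependent ℂ (Sum.elim x ![y]) ∧
      Submodule.span ℂ (Set.range (Sum.elim x ![y])) = ⊤ ∧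
      (∀ l : ℕ, ∀ hl : l < p,
        ⁅x ⟨2 * l, by omega⟩, x ⟨2 * l + 1, by omega⟩⁆ = x ⟨2 * p, by omega⟩) ∧
      ⁅x ⟨0, by omega⟩, y⁆ = y ∧
      (∀ i : Fin (2 * p + 1), i.val ≠ 0 → ⁅x i, y⁆ = 0) ∧
      (∀ i j : Fin (2 * p + 1), i < j →
        (∀ l : ℕ, l < p → ¬(i.val = 2 * l ∧ j.val = 2 * l + 1)) → ⁅x i, x j⁆ = 0) := by
  obtain ⟨y, g, hy, hIy, hgy, hg_lie, hg0⟩ :=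
    LieIdeal.exists_lie_eq_smul_of_finrank_eq_one_of_top_lie_eq_self hdimI hnp
  have hū := IsHeisenbergFamily.of_fin (u := fun i => LieSubmodule.Quotient.mk (N := I) (u i))
    (fun l hl => sub_eq_zero.mp ((LieSubmodule.Quotient.mk_eq_zero' (N := I)).mpr (hpair l hl)))
    (fun i j hij h => (LieSubmodule.Quotient.mk_eq_zero' (N := I)).mpr (hother i j hij h))
  have hQ : finrank ℂ (L ⧸ I) = 2 * p + 1 := by
    rw [← finrank_top, ← hu_span, finrank_span_eq_card hu_li, Fintype.card_fin]
  obtain ⟨w, hw, hw_li, hw_span, hw0, hwn⟩ := hū.exists_adapted_of_finrank_eq hp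
    (by rw [Fin.val_injective.extend_apply _ _ ⟨2 * p, by omega⟩]; exact hu_li.ne_zero _)
    hQ hg_lie hg0
  obtain ⟨x₀, hx₀ : LieSubmodule.Quotient.mk x₀ = w 0⟩ :=
    LieSubmodule.Quotient.surjective_mk' I (w 0)
  obtain ⟨X, hX, hXw⟩ := hw.exists_lift hp hw_span hx₀
    fun v => LieIdeal.lie_eq_self_of_mem hIy (by rw [hgy, hx₀, hw0, one_smul])
  have hXy (n : ℕ) : ⁅X n, y⁆ = g (w n) • y := by rw [hgy, hXw]
  have hL : finrank ℂ L = 2 * p + 2 :=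
    calc finrank ℂ L = finrank ℂ (L ⧸ I) + finrank ℂ I :=
          (Submodule.finrank_quotient_add_finrank _).symm
      _ = 2 * p + 2 := by rw [hQ, hdimI]
  have hB := linearIndependent_sumElim_singleton (N := (I : Submodule ℂ L))
    (x := fun i : Fin (2 * p + 1) => X i) (by simp only [← hXw] at hw_li; exact hw_li)
    (hIy ▸ mem_span_singleton_self y) hy
  exact ⟨_, y, hIy, hB, hB.span_eq_top_of_card_eq_finrank (by simp [hL]),
    fun l hl => hX.lie_pair l hl, by rw [hXy, hw0, one_smul],
    fun i hi => by rw [hXy, hwn _ hi, zero_smul],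
    fun i j hij h => hX.lie_eq_zero_of_lt hij (by omega) h⟩
end
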